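/- Epistemic stability lifting: for any thread A and state predicate φ, if (π,i) ⊨ Stable_A(φ) and (π,i) ⊨ Last_A(K_A φ), then (π,i) ⊨ φ. -/

import Mathlib

structure Run (S Tid : Type) where
  state : ℕ → S
  act : ℕ → Tid

def Hist {S Tid O : Type} [DecidableEq Tid] (obs : Tid → S → O) (A : Tid)
    (π : Run S Tid) (i : ℕ) : List O :=
  obs A (π.state 0) ::
    ((((List.range i).filter (fun k => decide (π.act k = A))).map
        (fun k => obs A (π.state (k + 1))))
      ++ [obs A (π.state i)])

def indist {S Tid O : Type} [DecidableEq Tid] (obs : Tid → S → O) (A : Tid)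
    (p q : Run S Tid × ℕ) : Prop :=
  Hist obs A p.1 p.2 = Hist obs A q.1 q.2

def Knows {S Tid O : Type} [DecidableEq Tid] (obs : Tid → S → O) (A : Tid)
    (φ : Run S Tid × ℕ → Prop) (p : Run S Tid × ℕ) : Prop :=
  ∀ q, indist obs A p q → φ q

def afterA {S Tid : Type} (A : Tid) (π : Run S Tid) (k : ℕ) : Prop :=
  0 < k ∧ π.act (k - 1) = A

def StableA {S Tid : Type} (A : Tid) (φ : S → Prop)
    (π : Run S Tid) (i : ℕ) : Prop :=
  ∀ k, 0 < k → k ≤ i → π.act (k - 1) ≠ A →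
    φ (π.state (k - 1)) → φ (π.state k)

def LastA {S Tid : Type} (A : Tid) (P : ℕ → Prop)
    (π : Run S Tid) (i : ℕ) : Prop :=
  ∃ j ≤ i, (afterA A π j ∧ P j) ∧ ∀ k, j < k → k ≤ i → ¬ afterA A π k

theorem indist_refl {S Tid O : Type} [DecidableEq Tid] (obs : Tid → S → O) (A : Tid)
    (p : Run S Tid × ℕ) : indist obs A p p :=
  rfl

theorem Knows.holds {S Tid O : Type} [DecidableEq Tid] {obs : Tid → S → O} {A : Tid}
    {ψ : Run S Tid × ℕ → Prop} {p : Run S Tid × ℕ} (h : Knows obs A ψ p) : ψ p :=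
  h p (indist_refl obs A p)

section Stability

variable {S Tid : Type} {A : Tid} {φ : S → Prop} {π : Run S Tid} {i : ℕ}

theorem StableA.step (hstable : StableA A φ π i) {m : ℕ} (hm : m + 1 ≤ i)
    (hact : π.act m ≠ A) (hφ : φ (π.state m)) : φ (π.state (m + 1)) :=
  hstable (m + 1) m.succ_pos hm hact hφ

theorem StableA.holds_of_not_afterA (hstable : StableA A φ π i) {j : ℕ}
    (hj : φ (π.state j)) (hno : ∀ k, j < k → k ≤ i → ¬ afterA A π k) :
    ∀ m, j ≤ m → m ≤ i → φ (π.state m) := by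
  intro m hjm
  induction m, hjm using Nat.le_induction with
  | base => exact fun _ => hj
  | succ m hjm ih =>
    intro hmi
    have hact : π.act m ≠ A := fun hA =>
      hno (m + 1) (Nat.lt_succ_of_le hjm) hmi ⟨m.succ_pos, hA⟩
    exact hstable.step hmi hact (ih (Nat.le_of_succ_le hmi))

end Stability

/-- epistemic stability lifting:
`Stable_A(φ) ∧ Last_A(K_A φ) ⊨ φ` for a state predicate `φ`. -/
theorem epistemic_stability_lifting {S Tid O : Type} [DecidableEq Tid]
    (obs : Tid → S → O) (A : Tid) (φ : S → Prop)
    (π : Run S Tid) (i : ℕ)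
    (hstable : StableA A φ π i)
    (hlast : LastA A
      (fun k => Knows obs A (fun q => φ (q.1.state q.2)) (π, k)) π i) :
    φ (π.state i) := by
  obtain ⟨j, hji, ⟨-, hknows⟩, hno⟩ := hlast
  exact hstable.holds_of_not_afterA hknows.holds hno i hji le_rfl
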